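/- arXiv:1301.1862 — 3 statements merged into one kernel-verified Lean document; each statement's English description precedes it below -/
import Mathlib

section
/- The functions g₁(t) = g₂(t) = (1 - 6t)^{1/6} and g₃(t) = (1 - 6t)^{-1/6} satisfy the ODE system ġ₁ = -g₃²/(g₁ g₂²), ġ₂ = -g₃²/(g₁² g₂), ġ₃ = g₃³/(g₁² g₂²) on (-∞, 1/6) with initial conditions g₁(0) = g₂(0) = g₃(0) = 1. -/
/-! With `u = 1 - 6t > 0` and `x = u^(1/6)`, all three functions are powers of `x`
(`g₁ = g₂ = x`, `g₃ = x⁻¹`, `u = x⁶`), and the chain rule gives `d/dt u^p = -6 p u^p / u`.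
Both sides of each equation then reduce to `-x⁻⁵` or `x⁻⁷`. -/

theorem hasDerivAt_one_sub_mul_rpow (c p : ℝ) {t : ℝ} (ht : 0 < 1 - c * t) :
    HasDerivAt (fun s => (1 - c * s) ^ p) (-c * p * ((1 - c * t) ^ p / (1 - c * t))) t := by
  have hlin : HasDerivAt (fun s => 1 - c * s) (-c) t := by
    simpa using ((hasDerivAt_id t).const_mul c).const_sub 1
  convert hlin.rpow_const (p := p) (Or.inl ht.ne') using 1
  rw [Real.rpow_sub_one ht.ne']

/-- the functions `g₁(t) = g₂(t) = (1-6t)^(1/6)` and `g₃(t) = (1-6t)^(-1/6)`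
satisfy the ODE system `ġ₁ = -g₃²/(g₁g₂²)`, `ġ₂ = -g₃²/(g₁²g₂)`, `ġ₃ = g₃³/(g₁²g₂²)` on
`(-∞, 1/6)` with `g₁(0) = g₂(0) = g₃(0) = 1`. -/
theorem iwasawa_flow_solution
    (g1 g2 g3 : ℝ → ℝ)
    (hg1 : ∀ t, g1 t = (1 - 6 * t) ^ ((1 : ℝ) / 6))
    (hg2 : ∀ t, g2 t = (1 - 6 * t) ^ ((1 : ℝ) / 6))
    (hg3 : ∀ t, g3 t = (1 - 6 * t) ^ (-(1 : ℝ) / 6)) :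
    g1 0 = 1 ∧ g2 0 = 1 ∧ g3 0 = 1 ∧
    ∀ t < (1 : ℝ) / 6,
      HasDerivAt g1 (-(g3 t) ^ 2 / (g1 t * (g2 t) ^ 2)) t ∧
      HasDerivAt g2 (-(g3 t) ^ 2 / ((g1 t) ^ 2 * g2 t)) t ∧
      HasDerivAt g3 ((g3 t) ^ 3 / ((g1 t) ^ 2 * (g2 t) ^ 2)) t := by
  refine ⟨by norm_num [hg1], by norm_num [hg2], by norm_num [hg3], fun t ht => ?_⟩
  have hu : 0 < 1 - 6 * t := by linarith
  have d1 := hasDerivAt_one_sub_mul_rpow 6 (1 / 6) hu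
  have d2 := hasDerivAt_one_sub_mul_rpow 6 (1 / 6) hu
  have d3 := hasDerivAt_one_sub_mul_rpow 6 (-1 / 6) hu
  rw [← funext hg1] at d1
  rw [← funext hg2] at d2
  rw [← funext hg3] at d3
  have hx : 0 < (1 - 6 * t) ^ ((1 : ℝ) / 6) := Real.rpow_pos_of_pos hu _
  have hu_eq : 1 - 6 * t = ((1 - 6 * t) ^ ((1 : ℝ) / 6)) ^ 6 := by
    rw [← Real.rpow_natCast, ← Real.rpow_mul hu.le]; norm_num
  have hinv : (1 - 6 * t) ^ (-(1 : ℝ) / 6) = ((1 - 6 * t) ^ ((1 : ℝ) / 6))⁻¹ := by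
    rw [neg_div, Real.rpow_neg hu.le]
  rw [hinv] at d3
  rw [hg1 t, hg2 t, hg3 t, hinv]
  generalize (1 - 6 * t) ^ ((1 : ℝ) / 6) = x at hx hu_eq d1 d2 d3 ⊢
  rw [hu_eq] at d1 d2 d3
  refine ⟨d1.congr_deriv ?_, d2.congr_deriv ?_, d3.congr_deriv ?_⟩ <;> field_simp
end

section
/- The solution (g₁, g₂, g₃)(t) = ((1-6t)^{1/6}, (1-6t)^{1/6}, (1-6t)^{-1/6}) of the system ġ₁ = -g₃²/(g₁g₂²), ġ₂ = -g₃²/(g₁²g₂), ġ₃ = g₃³/(g₁²g₂²) is an ancient non-eternal solution: it is defined for all t < 1/6 but not at t = 1/6, and g₃(t) → 0 and g₁(t) → +∞ as t → -∞ (in particular g₁(t)² g₂(t) → ∞, so the associated metrics diverge as t → -∞). -/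
open Filter Topology

lemma tendsto_sub_mul_atBot_atTop (a : ℝ) {c : ℝ} (hc : 0 < c) :
    Tendsto (fun t => a - c * t) atBot atTop :=
  tendsto_atTop_add_const_left atBot a
    (tendsto_neg_atBot_atTop.comp (tendsto_id.const_mul_atBot hc))

lemma tendsto_rpow_sub_mul_atBot_atTop (a : ℝ) {c p : ℝ} (hc : 0 < c) (hp : 0 < p) :
    Tendsto (fun t => (a - c * t) ^ p) atBot atTop :=
  (tendsto_rpow_atTop hp).comp (tendsto_sub_mul_atBot_atTop a hc)

lemma tendsto_rpow_neg_sub_mul_atBot_zero (a : ℝ) {c p : ℝ} (hc : 0 < c) (hp : 0 < p) :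
    Tendsto (fun t => (a - c * t) ^ (-p)) atBot (𝓝 0) :=
  (tendsto_rpow_neg_atTop hp).comp (tendsto_sub_mul_atBot_atTop a hc)

lemma tendsto_rpow_sub_mul_nhds_zero (a : ℝ) {c p : ℝ} (hc : c ≠ 0) (hp : 0 < p) :
    Tendsto (fun t => (a - c * t) ^ p) (𝓝 (a / c)) (𝓝 0) := by
  have hlin : Tendsto (fun t => a - c * t) (𝓝 (a / c)) (𝓝 0) := by
    have hcont : Continuous fun t : ℝ => a - c * t := by fun_prop
    simpa [mul_div_cancel₀ a hc] using hcont.tendsto (a / c)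
  simpa [Real.zero_rpow hp.ne'] using hlin.rpow_const (Or.inr hp.le)

/-- the solution `(g₁,g₂,g₃)(t) = ((1-6t)^(1/6), (1-6t)^(1/6), (1-6t)^(-1/6))`
of the Iwasawa flow is an ancient non-eternal solution: it is defined (positive) for all
`t < 1/6`, `g₁(t) → 0` as `t → 1/6⁻` (so it does not extend past `1/6`), while as
`t → -∞` one has `g₃(t) → 0`, `g₁(t) → +∞` and `g₁(t)² g₂(t) → +∞` (the metrics diverge). -/
theorem iwasawa_flow_ancient_non_eternal
    (g1 g2 g3 : ℝ → ℝ)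
    (hg1 : ∀ t, g1 t = (1 - 6 * t) ^ ((1 : ℝ) / 6))
    (hg2 : ∀ t, g2 t = (1 - 6 * t) ^ ((1 : ℝ) / 6))
    (hg3 : ∀ t, g3 t = (1 - 6 * t) ^ (-(1 : ℝ) / 6)) :
    (∀ t < (1 : ℝ) / 6, 0 < g1 t ∧ 0 < g2 t ∧ 0 < g3 t) ∧
    Tendsto g1 (nhdsWithin ((1 : ℝ) / 6) (Set.Iio ((1 : ℝ) / 6))) (nhds 0) ∧
    Tendsto g3 atBot (nhds 0) ∧
    Tendsto g1 atBot atTop ∧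
    Tendsto (fun t => (g1 t) ^ 2 * g2 t) atBot atTop := by
  obtain rfl : g1 = fun t => (1 - 6 * t) ^ ((1 : ℝ) / 6) := funext hg1
  obtain rfl : g2 = fun t => (1 - 6 * t) ^ ((1 : ℝ) / 6) := funext hg2
  obtain rfl : g3 = fun t => (1 - 6 * t) ^ (-((1 : ℝ) / 6)) := funext fun t => by rw [hg3, neg_div]
  have hpos : (0 : ℝ) < 1 / 6 := by norm_num
  have hg1top := tendsto_rpow_sub_mul_atBot_atTop 1 (by norm_num : (0 : ℝ) < 6) hpos
  refine ⟨fun t ht => ?_, ?_, tendsto_rpow_neg_sub_mul_atBot_zero 1 (by norm_num) hpos, hg1top,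
    ((tendsto_pow_atTop two_ne_zero).comp hg1top).atTop_mul_atTop₀ hg1top⟩
  · have hu : 0 < 1 - 6 * t := by linarith
    exact ⟨by positivity, by positivity, by positivity⟩
  · exact (tendsto_rpow_sub_mul_nhds_zero 1 (by norm_num) hpos).mono_left nhdsWithin_le_nhds
end

section
/- On the complex Heisenberg Lie algebra with (1,0)-coframe α¹, α², α³ satisfying dα¹ = dα² = 0 and dα³ = α¹ ∧ α², every left-invariant Hermitian fundamental form ω (a positive (1,1)-form on the Lie algebra) satisfies d(ω²) = 0, i.e. every left-invariant Hermitian metric on the Iwasawa manifold is balanced. -/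
/-!
Invariant 1-forms anticommute, so each of them commutes with the (1,1)-form
`θ = ∑ g j k • (α j * β k)`, and the structure equations give
`dθ = α 0 * α 1 * b 2 - a 2 * (β 0 * β 1)` with `a k = ∑ j, g j k • α j`, `b j = ∑ k, g j k • β k`.
Writing `θ = ∑ j, α j * b j`, the product `α 0 * α 1 * b 2 * θ` vanishes term by term: either
`α 0 * α 1 * α j = 0` or `j = 2` and `b 2 * b 2 = 0`; symmetrically with `θ = -∑ k, β k * a k`
for the second term. So `dθ * θ = 0`, and as `θ` commutes with `dθ`, `d(ω²) = dω * ω + ω * dω`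
vanishes for `ω = I • θ`, whatever `g` is.
-/

open scoped ComplexOrder

open Submodule Finset

section AntiCommuting

variable {Λ : Type*} [Ring Λ]

def IsAntiCommuting (s : Set Λ) : Prop := ∀ x ∈ s, ∀ y ∈ s, x * y = -(y * x)

variable {s : Set Λ}

theorem IsAntiCommuting.mul_self_eq_zero [IsAddTorsionFree Λ] (hs : IsAntiCommuting s)
    {x : Λ} (hx : x ∈ s) : x * x = 0 := by
  have h := hs x hx x hx
  rwa [eq_neg_iff_add_eq_zero, ← two_nsmul, two_nsmul_eq_zero] at h

theorem IsAntiCommuting.commute_mul (hs : IsAntiCommuting s) {x y z : Λ} (hx : x ∈ s)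
    (hy : y ∈ s) (hz : z ∈ s) : Commute x (y * z) := by
  rw [Commute, SemiconjBy, ← mul_assoc, hs x hx y hy, neg_mul, mul_assoc, hs x hx z hz,
    mul_neg, neg_neg, mul_assoc]

theorem IsAntiCommuting.mul_mul_mul_sum_mul_eq_zero [IsAddTorsionFree Λ]
    (hs : IsAntiCommuting s) {u v : Fin 3 → Λ} (hu : ∀ i, u i ∈ s) (hv : ∀ i, v i ∈ s) :
    u 0 * u 1 * v 2 * ∑ j, u j * v j = 0 := by
  have hu01 : u 0 * u 1 * u 0 = 0 := by
    rw [hs _ (hu 0) _ (hu 1), neg_mul, mul_assoc, hs.mul_self_eq_zero (hu 0), mul_zero,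
      neg_zero]
  have hu11 : u 0 * u 1 * u 1 = 0 := by rw [mul_assoc, hs.mul_self_eq_zero (hu 1), mul_zero]
  have hterm : ∀ j, u 0 * u 1 * v 2 * (u j * v j) = u 0 * u 1 * u j * (v j * v 2) := fun j => by
    rw [mul_assoc _ (v 2), (hs.commute_mul (hv 2) (hu j) (hv j)).eq, mul_assoc, mul_assoc,
      mul_assoc, mul_assoc]
  rw [mul_sum, Fin.sum_univ_three, hterm, hterm, hterm, hu01, hu11,
    hs.mul_self_eq_zero (hv 2)]
  simp only [zero_mul, mul_zero, add_zero]

theorem isAntiCommuting_range_union {ι : Type*} {α β : ι → Λ}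
    (hαα : ∀ i j, α i * α j = -(α j * α i)) (hββ : ∀ i j, β i * β j = -(β j * β i))
    (hαβ : ∀ i j, α i * β j = -(β j * α i)) : IsAntiCommuting (Set.range α ∪ Set.range β) := by
  rintro _ (⟨i, rfl⟩ | ⟨i, rfl⟩) _ (⟨j, rfl⟩ | ⟨j, rfl⟩)
  · exact hαα i j
  · exact hαβ i j
  · rw [hαβ j i, neg_neg]
  · exact hββ i j

variable {K : Type*} [CommRing K] [Algebra K Λ]

theorem IsAntiCommuting.span (hs : IsAntiCommuting s) :
    IsAntiCommuting (Submodule.span K s : Set Λ) := by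
  -- `x * y + y * x` is bilinear, so it vanishes on the span once it vanishes on `s`.
  let B : Λ →ₗ[K] Λ →ₗ[K] Λ := LinearMap.mul K Λ + (LinearMap.mul K Λ).flip
  have hB : ∀ x y, B x y = x * y + y * x := fun _ _ => rfl
  have hs' : ∀ y ∈ s, Submodule.span K s ≤ LinearMap.ker (B.flip y) := fun y hy =>
    span_le.2 fun x hx => by simp [hB, hs x hx y hy]
  intro x hx y hy
  have hx' : Submodule.span K s ≤ LinearMap.ker (B x) := span_le.2 fun y hy' => hs' y hy' hx
  rw [← add_eq_zero_iff_eq_neg, ← hB]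
  exact hx' hy

end AntiCommuting

section OneOneForm

variable {ι K Λ : Type*} [Fintype ι] [CommRing K] [Ring Λ] [Algebra K Λ]

def oneOneForm (g : Matrix ι ι K) (α β : ι → Λ) : Λ := ∑ j, ∑ k, g j k • (α j * β k)

variable (g : Matrix ι ι K) (α β : ι → Λ)

theorem oneOneForm_eq_sum_mul_sum_smul :
    oneOneForm g α β = ∑ j, α j * ∑ k, g j k • β k := by
  simp only [oneOneForm, mul_sum, mul_smul_comm]

theorem oneOneForm_eq_sum_sum_smul_mul :
    oneOneForm g α β = ∑ k, (∑ j, g j k • α j) * β k := by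
  rw [oneOneForm, sum_comm]
  simp only [sum_mul, smul_mul_assoc]

theorem IsAntiCommuting.commute_oneOneForm {V : Submodule K Λ}
    (hV : IsAntiCommuting (V : Set Λ)) (hα : ∀ i, α i ∈ V) (hβ : ∀ i, β i ∈ V) {x : Λ}
    (hx : x ∈ V) : Commute x (oneOneForm g α β) := by
  rw [oneOneForm_eq_sum_mul_sum_smul]
  exact Commute.sum_right _ _ _ fun j _ =>
    hV.commute_mul hx (hα j) (sum_mem fun k _ => V.smul_mem _ (hβ k))

end OneOneForm

section Iwasawa

variable {K Λ : Type*} [CommRing K] [Ring Λ] [Algebra K Λ]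

/-- `β` stands for the conjugate coframe `ᾱ`; `d_mul` is the Leibniz rule on `α i ∧ ᾱ j`. -/
structure IsIwasawaCoframe (d : Λ →ₗ[K] Λ) (α β : Fin 3 → Λ) : Prop where
  d_α_zero : d (α 0) = 0
  d_α_one : d (α 1) = 0
  d_α_two : d (α 2) = α 0 * α 1
  d_β_zero : d (β 0) = 0
  d_β_one : d (β 1) = 0
  d_β_two : d (β 2) = β 0 * β 1
  d_mul : ∀ i j, d (α i * β j) = d (α i) * β j - α i * d (β j)

variable {d : Λ →ₗ[K] Λ} {α β : Fin 3 → Λ}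

theorem IsIwasawaCoframe.d_oneOneForm (h : IsIwasawaCoframe d α β)
    (g : Matrix (Fin 3) (Fin 3) K) :
    d (oneOneForm g α β) = α 0 * α 1 * ∑ k, g 2 k • β k - (∑ j, g j 2 • α j) * (β 0 * β 1) := by
  simp only [oneOneForm, map_sum, map_smul, h.d_mul]
  simp only [Fin.sum_univ_three, h.d_α_zero, h.d_α_one, h.d_α_two, h.d_β_zero, h.d_β_one,
    h.d_β_two, zero_mul, mul_zero, add_mul, mul_add, smul_mul_assoc, mul_smul_comm, mul_assoc]
  module

variable {V : Submodule K Λ}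

theorem IsIwasawaCoframe.d_oneOneForm_mul_oneOneForm [IsAddTorsionFree Λ]
    (h : IsIwasawaCoframe d α β) (hV : IsAntiCommuting (V : Set Λ)) (hα : ∀ i, α i ∈ V)
    (hβ : ∀ i, β i ∈ V) (g : Matrix (Fin 3) (Fin 3) K) :
    d (oneOneForm g α β) * oneOneForm g α β = 0 := by
  have ha : ∀ k, ∑ j, g j k • α j ∈ V := fun k => sum_mem fun j _ => V.smul_mem _ (hα j)
  have hb : ∀ j, ∑ k, g j k • β k ∈ V := fun j => sum_mem fun k _ => V.smul_mem _ (hβ k)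
  have hα_part : α 0 * α 1 * (∑ k, g 2 k • β k) * oneOneForm g α β = 0 := by
    rw [oneOneForm_eq_sum_mul_sum_smul]
    exact hV.mul_mul_mul_sum_mul_eq_zero hα hb
  have hβ_part : (∑ j, g j 2 • α j) * (β 0 * β 1) * oneOneForm g α β = 0 := by
    have hθ : oneOneForm g α β = -∑ k, β k * ∑ j, g j k • α j := by
      rw [oneOneForm_eq_sum_sum_smul_mul, ← sum_neg_distrib]
      exact sum_congr rfl fun k _ => hV _ (ha k) _ (hβ k)
    rw [(hV.commute_mul (ha 2) (hβ 0) (hβ 1)).eq, hθ, mul_neg,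
      hV.mul_mul_mul_sum_mul_eq_zero hβ ha, neg_zero]
  rw [h.d_oneOneForm, sub_mul, hα_part, hβ_part, sub_zero]

theorem IsIwasawaCoframe.commute_oneOneForm_d_oneOneForm (h : IsIwasawaCoframe d α β)
    (hV : IsAntiCommuting (V : Set Λ)) (hα : ∀ i, α i ∈ V) (hβ : ∀ i, β i ∈ V)
    (g : Matrix (Fin 3) (Fin 3) K) : Commute (oneOneForm g α β) (d (oneOneForm g α β)) := by
  have hθ : ∀ x ∈ V, Commute (oneOneForm g α β) x := fun x hx =>
    (hV.commute_oneOneForm g α β hα hβ hx).symm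
  have ha : Commute _ (∑ j, g j 2 • α j) := hθ _ (sum_mem fun j _ => V.smul_mem _ (hα j))
  have hb : Commute _ (∑ k, g 2 k • β k) := hθ _ (sum_mem fun k _ => V.smul_mem _ (hβ k))
  rw [h.d_oneOneForm]
  exact (((hθ _ (hα 0)).mul_right (hθ _ (hα 1))).mul_right hb).sub_right
    (ha.mul_right ((hθ _ (hβ 0)).mul_right (hθ _ (hβ 1))))

end Iwasawa

theorem iwasawa_invariant_metrics_balanced_general
    {Λ : Type*} [Ring Λ] [Algebra ℂ Λ]
    (α β : Fin 3 → Λ) (d : Λ →ₗ[ℂ] Λ)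
    (hanti_αα : ∀ i j, α i * α j = -(α j * α i))
    (hanti_ββ : ∀ i j, β i * β j = -(β j * β i))
    (hanti_αβ : ∀ i j, α i * β j = -(β j * α i))
    (hdα0 : d (α 0) = 0) (hdα1 : d (α 1) = 0) (hdα2 : d (α 2) = α 0 * α 1)
    (hdβ0 : d (β 0) = 0) (hdβ1 : d (β 1) = 0) (hdβ2 : d (β 2) = β 0 * β 1)
    (hLeib1 : ∀ i j, d (α i * β j) = d (α i) * β j - α i * d (β j))
    (g : Matrix (Fin 3) (Fin 3) ℂ)
    (ω : Λ)
    (hω : ω = Complex.I • ∑ j : Fin 3, ∑ k : Fin 3, g j k • (α j * β k))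
    (hLeib2 : d (ω * ω) = d ω * ω + ω * d ω) :
    d (ω * ω) = 0 := by
  have : IsAddTorsionFree Λ := .of_isTorsionFree ℂ Λ
  have h : IsIwasawaCoframe d α β := ⟨hdα0, hdα1, hdα2, hdβ0, hdβ1, hdβ2, hLeib1⟩
  set V := Submodule.span ℂ (Set.range α ∪ Set.range β)
  have hV : IsAntiCommuting (V : Set Λ) :=
    (isAntiCommuting_range_union hanti_αα hanti_ββ hanti_αβ).span
  have hα : ∀ i, α i ∈ V := fun i => subset_span (Or.inl ⟨i, rfl⟩)
  have hβ : ∀ i, β i ∈ V := fun i => subset_span (Or.inr ⟨i, rfl⟩)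
  change ω = Complex.I • oneOneForm g α β at hω
  rw [hLeib2, hω, map_smul, smul_mul_smul_comm, smul_mul_smul_comm,
    (h.commute_oneOneForm_d_oneOneForm hV hα hβ g).eq,
    h.d_oneOneForm_mul_oneOneForm hV hα hβ g, smul_zero, add_zero]

/-- on the complex Heisenberg Lie algebra with (1,0)-coframe `α¹,α²,α³`
(and conjugates `ᾱ¹,ᾱ²,ᾱ³`, here `β`) satisfying `dα¹ = dα² = 0`, `dα³ = α¹∧α²`, every
left-invariant Hermitian fundamental form `ω = i Σ g_{jk̄} α^j∧ᾱ^k` (with `g` a positive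
definite Hermitian matrix) satisfies `d(ω²) = 0`: every left-invariant Hermitian metric
on the Iwasawa manifold is balanced. Modeled in an abstract (noncommutative) algebra of
invariant forms, with anticommutation of 1-forms and the Leibniz rule as hypotheses. -/
theorem iwasawa_invariant_metrics_balanced
    {Λ : Type*} [Ring Λ] [Algebra ℂ Λ]
    (α β : Fin 3 → Λ) (d : Λ →ₗ[ℂ] Λ)
    (hanti_αα : ∀ i j, α i * α j = -(α j * α i))
    (hanti_ββ : ∀ i j, β i * β j = -(β j * β i))
    (hanti_αβ : ∀ i j, α i * β j = -(β j * α i))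
    (hdα0 : d (α 0) = 0) (hdα1 : d (α 1) = 0) (hdα2 : d (α 2) = α 0 * α 1)
    (hdβ0 : d (β 0) = 0) (hdβ1 : d (β 1) = 0) (hdβ2 : d (β 2) = β 0 * β 1)
    (hLeib1 : ∀ i j, d (α i * β j) = d (α i) * β j - α i * d (β j))
    (g : Matrix (Fin 3) (Fin 3) ℂ) (hg : g.PosDef)
    (ω : Λ)
    (hω : ω = Complex.I • ∑ j : Fin 3, ∑ k : Fin 3, g j k • (α j * β k))
    (hLeib2 : d (ω * ω) = d ω * ω + ω * d ω) :
    d (ω * ω) = 0 :=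
  iwasawa_invariant_metrics_balanced_general α β d hanti_αα hanti_ββ hanti_αβ hdα0 hdα1 hdα2 hdβ0
    hdβ1 hdβ2 hLeib1 g ω hω hLeib2
end
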